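/- Let h ∈ ℝ, h ≠ 0, and for each n ∈ ℤ let f_n : ℝ → ℝ be smooth and everywhere positive. Set w_n = 2 log f_n, v_n = w_n', u_n = v_n', p_n = u_n', q_n = p_n', r_n = q_n'. If for all n the discrete bilinear relation (D_x² − (2/h)·D_x) f_{n+1}·f_n = 0 holds, then for all n: u_{n+1} + u_n = (2/h)(v_{n+1} − v_n) − (1/2)(v_{n+1} − v_n)²; p_{n+1} + p_n = (2/h)(u_{n+1} − u_n) − (u_{n+1} − u_n)(v_{n+1} − v_n); q_{n+1} + q_n = (2/h)(p_{n+1} − p_n) − (u_{n+1} − u_n)² − (p_{n+1} − p_n)(v_{n+1} − v_n); and r_{n+1} + r_n = (2/h)(q_{n+1} − q_n) − 3(p_{n+1} − p_n)(u_{n+1} − u_n) − (q_{n+1} − q_n)(v_{n+1} − v_n). -/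

import Mathlib

open scoped ContDiff

noncomputable section

/-- `D_x a·b = a' b − a b'`. -/
def HDx (a b : ℝ → ℝ) : ℝ → ℝ :=
  fun x => deriv a x * b x - a x * deriv b x

/-- `D_x² a·b = a'' b − 2 a' b' + a b''`. -/
def HDx2 (a b : ℝ → ℝ) : ℝ → ℝ :=
  fun x => deriv (deriv a) x * b x - 2 * deriv a x * deriv b x + a x * deriv (deriv b) x

theorem stmt_14
    (h : ℝ) (hh : h ≠ 0)
    (f : ℤ → ℝ → ℝ)
    (hf : ∀ n, ContDiff ℝ (⊤ : ℕ∞) (f n)) (hfpos : ∀ n x, 0 < f n x)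
    (w v u p q r : ℤ → ℝ → ℝ)
    (hw : ∀ n, w n = fun x => 2 * Real.log (f n x))
    (hv : ∀ n, v n = deriv (w n)) (hu : ∀ n, u n = deriv (v n))
    (hp : ∀ n, p n = deriv (u n)) (hq : ∀ n, q n = deriv (p n))
    (hr : ∀ n, r n = deriv (q n))
    (hbil : ∀ n x, HDx2 (f (n + 1)) (f n) x - (2 / h) * HDx (f (n + 1)) (f n) x = 0) :
    (∀ n x, u (n + 1) x + u n x
        = (2 / h) * (v (n + 1) x - v n x) - (1 / 2) * (v (n + 1) x - v n x) ^ 2) ∧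
    (∀ n x, p (n + 1) x + p n x
        = (2 / h) * (u (n + 1) x - u n x) - (u (n + 1) x - u n x) * (v (n + 1) x - v n x)) ∧
    (∀ n x, q (n + 1) x + q n x
        = (2 / h) * (p (n + 1) x - p n x) - (u (n + 1) x - u n x) ^ 2
          - (p (n + 1) x - p n x) * (v (n + 1) x - v n x)) ∧
    (∀ n x, r (n + 1) x + r n x
        = (2 / h) * (q (n + 1) x - q n x)
          - 3 * (p (n + 1) x - p n x) * (u (n + 1) x - u n x)
          - (q (n + 1) x - q n x) * (v (n + 1) x - v n x)) := by
  have hfi : ∀ n, ContDiff ℝ ∞ (f n) := fun n => (hf n).of_le (by simp)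
  have hfd : ∀ n, Differentiable ℝ (f n) := fun n => (contDiff_infty_iff_deriv.mp (hfi n)).1
  have hf'c : ∀ n, ContDiff ℝ ∞ (deriv (f n)) := fun n => (contDiff_infty_iff_deriv.mp (hfi n)).2
  have hfd' : ∀ n, Differentiable ℝ (deriv (f n)) := fun n => (contDiff_infty_iff_deriv.mp (hf'c n)).1
  have hws : ∀ n, ContDiff ℝ ∞ (w n) := by
    intro n; rw [hw n]
    exact contDiff_const.mul ((hfi n).log (fun x => (hfpos n x).ne'))
  have hvs : ∀ n, ContDiff ℝ ∞ (v n) := by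
    intro n; rw [hv n]; exact (contDiff_infty_iff_deriv.mp (hws n)).2
  have hus : ∀ n, ContDiff ℝ ∞ (u n) := by
    intro n; rw [hu n]; exact (contDiff_infty_iff_deriv.mp (hvs n)).2
  have hps : ∀ n, ContDiff ℝ ∞ (p n) := by
    intro n; rw [hp n]; exact (contDiff_infty_iff_deriv.mp (hus n)).2
  have hqs : ∀ n, ContDiff ℝ ∞ (q n) := by
    intro n; rw [hq n]; exact (contDiff_infty_iff_deriv.mp (hps n)).2
  -- pointwise derivative facts
  have hvda : ∀ n x, HasDerivAt (v n) (u n x) x := by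
    intro n x; rw [hu n]; exact ((contDiff_infty_iff_deriv.mp (hvs n)).1 x).hasDerivAt
  have huda : ∀ n x, HasDerivAt (u n) (p n x) x := by
    intro n x; rw [hp n]; exact ((contDiff_infty_iff_deriv.mp (hus n)).1 x).hasDerivAt
  have hpda : ∀ n x, HasDerivAt (p n) (q n x) x := by
    intro n x; rw [hq n]; exact ((contDiff_infty_iff_deriv.mp (hps n)).1 x).hasDerivAt
  have hqda : ∀ n x, HasDerivAt (q n) (r n x) x := by
    intro n x; rw [hr n]; exact ((contDiff_infty_iff_deriv.mp (hqs n)).1 x).hasDerivAt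
  -- explicit formulas for v and u
  have hveq : ∀ n x, v n x = 2 * (deriv (f n) x / f n x) := by
    intro n x
    have : HasDerivAt (w n) (2 * (deriv (f n) x / f n x)) x := by
      rw [hw n]
      exact (((hfd n x).hasDerivAt).log (hfpos n x).ne').const_mul 2
    rw [hv n]; exact this.deriv
  have hueq : ∀ n x, u n x
      = 2 * ((deriv (deriv (f n)) x * f n x - deriv (f n) x * deriv (f n) x) / f n x ^ 2) := by
    intro n x
    have hvfun : v n = fun y => 2 * (deriv (f n) y / f n y) := funext (hveq n)
    have : HasDerivAt (v n)
        (2 * ((deriv (deriv (f n)) x * f n x - deriv (f n) x * deriv (f n) x) / f n x ^ 2)) x := by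
      rw [hvfun]
      exact (((hfd' n x).hasDerivAt).div ((hfd n x).hasDerivAt) (hfpos n x).ne').const_mul 2
    rw [hu n]; exact this.deriv
  -- first equation
  have E1 : ∀ n x, u (n + 1) x + u n x
      = (2 / h) * (v (n + 1) x - v n x) - (1 / 2) * (v (n + 1) x - v n x) ^ 2 := by
    intro n x
    have hb := hbil n x
    simp only [HDx, HDx2] at hb
    rw [hueq, hueq, hveq, hveq]
    have h0 := (hfpos n x).ne'
    have h1 := (hfpos (n + 1) x).ne'
    field_simp at hb ⊢
    linear_combination (f (n + 1) x * f n x) * hb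
  have E2 : ∀ n x, p (n + 1) x + p n x
      = (2 / h) * (u (n + 1) x - u n x) - (u (n + 1) x - u n x) * (v (n + 1) x - v n x) := by
    intro n x
    have hfun : (fun y => u (n + 1) y + u n y)
        = fun y => (2 / h) * (v (n + 1) y - v n y) - (1 / 2) * (v (n + 1) y - v n y) ^ 2 :=
      funext fun y => E1 n y
    have hL : HasDerivAt (fun y => u (n + 1) y + u n y) (p (n + 1) x + p n x) x :=
      (huda (n + 1) x).add (huda n x)
    have hR : HasDerivAt
        (fun y => (2 / h) * (v (n + 1) y - v n y) - (1 / 2) * (v (n + 1) y - v n y) ^ 2)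
        ((2 / h) * (u (n + 1) x - u n x) - (u (n + 1) x - u n x) * (v (n + 1) x - v n x)) x := by
      have h1 := (hvda (n + 1) x).sub (hvda n x)
      have h2 := ((h1.const_mul (2 / h)).sub ((h1.pow 2).const_mul (1 / 2)))
      refine h2.congr_deriv ?_
      simp only [Pi.sub_apply]
      push_cast
      ring
    exact (hfun ▸ hL).unique hR
  have E3 : ∀ n x, q (n + 1) x + q n x
      = (2 / h) * (p (n + 1) x - p n x) - (u (n + 1) x - u n x) ^ 2
        - (p (n + 1) x - p n x) * (v (n + 1) x - v n x) := by
    intro n x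
    have hfun : (fun y => p (n + 1) y + p n y)
        = fun y => (2 / h) * (u (n + 1) y - u n y)
          - (u (n + 1) y - u n y) * (v (n + 1) y - v n y) :=
      funext fun y => E2 n y
    have hL : HasDerivAt (fun y => p (n + 1) y + p n y) (q (n + 1) x + q n x) x :=
      (hpda (n + 1) x).add (hpda n x)
    have hR : HasDerivAt
        (fun y => (2 / h) * (u (n + 1) y - u n y)
          - (u (n + 1) y - u n y) * (v (n + 1) y - v n y))
        ((2 / h) * (p (n + 1) x - p n x) - (u (n + 1) x - u n x) ^ 2
          - (p (n + 1) x - p n x) * (v (n + 1) x - v n x)) x := by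
      have h1 := (huda (n + 1) x).sub (huda n x)
      have h2 := (hvda (n + 1) x).sub (hvda n x)
      have h3 := ((h1.const_mul (2 / h)).sub (h1.mul h2))
      refine h3.congr_deriv ?_
      simp only [Pi.sub_apply]
      ring
    exact (hfun ▸ hL).unique hR
  have E4 : ∀ n x, r (n + 1) x + r n x
      = (2 / h) * (q (n + 1) x - q n x)
        - 3 * (p (n + 1) x - p n x) * (u (n + 1) x - u n x)
        - (q (n + 1) x - q n x) * (v (n + 1) x - v n x) := by
    intro n x
    have hfun : (fun y => q (n + 1) y + q n y)
        = fun y => (2 / h) * (p (n + 1) y - p n y) - (u (n + 1) y - u n y) ^ 2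
          - (p (n + 1) y - p n y) * (v (n + 1) y - v n y) :=
      funext fun y => E3 n y
    have hL : HasDerivAt (fun y => q (n + 1) y + q n y) (r (n + 1) x + r n x) x :=
      (hqda (n + 1) x).add (hqda n x)
    have hR : HasDerivAt
        (fun y => (2 / h) * (p (n + 1) y - p n y) - (u (n + 1) y - u n y) ^ 2
          - (p (n + 1) y - p n y) * (v (n + 1) y - v n y))
        ((2 / h) * (q (n + 1) x - q n x)
          - 3 * (p (n + 1) x - p n x) * (u (n + 1) x - u n x)
          - (q (n + 1) x - q n x) * (v (n + 1) x - v n x)) x := by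
      have h1 := (huda (n + 1) x).sub (huda n x)
      have h2 := (hvda (n + 1) x).sub (hvda n x)
      have h3 := (hpda (n + 1) x).sub (hpda n x)
      have h4 := (((h3.const_mul (2 / h)).sub ((h1.pow 2))).sub (h3.mul h2))
      refine h4.congr_deriv ?_
      simp only [Pi.sub_apply]
      push_cast
      ring
    exact (hfun ▸ hL).unique hR
  exact ⟨E1, E2, E3, E4⟩
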